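/- Let A be an n×n real matrix, B an n×m real matrix, and let Q, Q_f, L be n×n real symmetric positive definite matrices and R an m×m real symmetric positive definite matrix. Define P_N := Q_f and, for t = N−1, …, 1, 0, P_t := Aᵀ(P_{t+1}⁻¹ + B R⁻¹ Bᵀ − (P_{t+1} + L)⁻¹)⁻¹ A + Q. Then for every t ∈ {0, 1, …, N}, the matrix P_t is well defined (all indicated inverses exist) and is symmetric positive definite. -/

import Mathlib

open Matrix

/-- Congruence by an invertible matrix preserves positive definiteness (real case). -/
lemma posDef_conj_of_isUnit {n : ℕ} {M C : Matrix (Fin n) (Fin n) ℝ}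
    (hM : M.PosDef) (hC : IsUnit C) : (Cᵀ * M * C).PosDef := by
  rw [← Matrix.conjTranspose_eq_transpose_of_trivial]
  rw [Matrix.posDef_iff_dotProduct_mulVec]
  constructor
  · exact Matrix.isHermitian_conjTranspose_mul_mul C hM.1
  · intro x hx
    have hinj : Function.Injective (C.mulVec) := Matrix.mulVec_injective_iff_isUnit.mpr hC
    have hx' : C *ᵥ x ≠ 0 := fun h => hx (hinj (by simpa using h))
    simpa only [star_mulVec, dotProduct_mulVec, vecMul_vecMul] using hM.dotProduct_mulVec_pos hx'

/-- The key inequality: for positive definite `S`, `L`, the matrix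
`S⁻¹ - (S + L)⁻¹` is positive definite. -/
lemma inv_sub_inv_posDef {n : ℕ} {S L : Matrix (Fin n) (Fin n) ℝ}
    (hS : S.PosDef) (hL : L.PosDef) : (S⁻¹ - (S + L)⁻¹).PosDef := by
  set T := S + L with hT
  have hTpd : T.PosDef := hS.add hL
  have hSd : IsUnit S.det := hS.det_pos.ne'.isUnit
  have hTd : IsUnit T.det := hTpd.det_pos.ne'.isUnit
  have hTsymm : (T⁻¹)ᵀ = T⁻¹ := by
    have := (hTpd.isHermitian.inv).eq
    simpa [Matrix.conjTranspose_eq_transpose_of_trivial] using this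
  have key0 : S⁻¹ - T⁻¹ = T⁻¹ * L * S⁻¹ := by
    have h3 : T⁻¹ * L * S⁻¹ = T⁻¹ * (T - S) * S⁻¹ := by rw [hT]; noncomm_ring
    rw [h3, Matrix.mul_sub, Matrix.nonsing_inv_mul T hTd, Matrix.sub_mul, Matrix.one_mul,
      Matrix.mul_assoc, Matrix.mul_nonsing_inv S hSd, Matrix.mul_one]
  have key : S⁻¹ - T⁻¹ = (T⁻¹)ᵀ * (L + L * S⁻¹ * L) * T⁻¹ := by
    rw [hTsymm, key0]
    have h1 : L + L * S⁻¹ * L = L * S⁻¹ * T := by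
      rw [hT, Matrix.mul_add, Matrix.mul_assoc L S⁻¹ S, Matrix.nonsing_inv_mul S hSd]
      simp [Matrix.mul_assoc]
    rw [h1]
    have h2 : T⁻¹ * (L * S⁻¹ * T) * T⁻¹ = T⁻¹ * (L * S⁻¹) * (T * T⁻¹) := by noncomm_ring
    rw [h2, Matrix.mul_nonsing_inv T hTd, Matrix.mul_one, Matrix.mul_assoc]
  rw [key]
  have hLSL : (L + L * S⁻¹ * L).PosDef := by
    have : (L * S⁻¹ * L).PosDef := by
      have := posDef_conj_of_isUnit hS.inv hL.isUnit
      have hLsymm : Lᵀ = L := by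
        have := hL.isHermitian.eq
        simpa [Matrix.conjTranspose_eq_transpose_of_trivial] using this
      rwa [hLsymm] at this
    exact hL.add this
  exact posDef_conj_of_isUnit hLSL (Matrix.isUnit_nonsing_inv_iff.mpr hTpd.isUnit)

/-- The middle matrix in the recursion is positive definite. -/
lemma middle_posDef {n m : ℕ}
    (B : Matrix (Fin n) (Fin m) ℝ) {S L : Matrix (Fin n) (Fin n) ℝ}
    {R : Matrix (Fin m) (Fin m) ℝ}
    (hS : S.PosDef) (hL : L.PosDef) (hR : R.PosDef) :
    (S⁻¹ + B * R⁻¹ * Bᵀ - (S + L)⁻¹).PosDef := by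
  have h1 : (S⁻¹ - (S + L)⁻¹).PosDef := inv_sub_inv_posDef hS hL
  have h2 : (B * R⁻¹ * Bᵀ).PosSemidef := by
    have := hR.inv.posSemidef.mul_mul_conjTranspose_same B
    simpa [Matrix.conjTranspose_eq_transpose_of_trivial] using this
  have : (S⁻¹ - (S + L)⁻¹ + B * R⁻¹ * Bᵀ).PosDef := h1.add_posSemidef h2
  have heq : S⁻¹ + B * R⁻¹ * Bᵀ - (S + L)⁻¹
      = S⁻¹ - (S + L)⁻¹ + B * R⁻¹ * Bᵀ := by abel
  rwa [heq]

/-- The Riccati-like recursion of Theorem 3 preserves well-definedness and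
positive definiteness: if `P N = Q_f` and
`P t = Aᵀ (P (t+1)⁻¹ + B R⁻¹ Bᵀ − (P (t+1) + L)⁻¹)⁻¹ A + Q` for `t < N`, then
every `P t` (for `t ≤ N`) is positive definite, and the matrix being inverted
at each step is invertible (indeed, its inverse is well defined since the
matrix is a unit). -/
theorem stmt_1 {n m : ℕ} (N : ℕ)
    (A : Matrix (Fin n) (Fin n) ℝ) (B : Matrix (Fin n) (Fin m) ℝ)
    (Q Qf L : Matrix (Fin n) (Fin n) ℝ) (R : Matrix (Fin m) (Fin m) ℝ)
    (hQ : Q.PosDef) (hQf : Qf.PosDef) (hL : L.PosDef) (hR : R.PosDef)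
    (P : ℕ → Matrix (Fin n) (Fin n) ℝ)
    (hPN : P N = Qf)
    (hPrec : ∀ t, t < N →
      P t = Aᵀ * ((P (t + 1))⁻¹ + B * R⁻¹ * Bᵀ - (P (t + 1) + L)⁻¹)⁻¹ * A + Q) :
    (∀ t, t ≤ N → (P t).PosDef) ∧
    (∀ t, t < N →
      IsUnit ((P (t + 1))⁻¹ + B * R⁻¹ * Bᵀ - (P (t + 1) + L)⁻¹)) := by
  have step : ∀ t, t < N → (P (t + 1)).PosDef → (P t).PosDef := by
    intro t ht hP1
    have hM : ((P (t + 1))⁻¹ + B * R⁻¹ * Bᵀ - (P (t + 1) + L)⁻¹).PosDef :=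
      middle_posDef B hP1 hL hR
    rw [hPrec t ht]
    have h2 : (Aᵀ * ((P (t + 1))⁻¹ + B * R⁻¹ * Bᵀ - (P (t + 1) + L)⁻¹)⁻¹ * A).PosSemidef := by
      have := hM.inv.posSemidef.conjTranspose_mul_mul_same A
      simpa [Matrix.conjTranspose_eq_transpose_of_trivial] using this
    exact Matrix.PosDef.posSemidef_add h2 hQ
  have key : ∀ k, k ≤ N → (P (N - k)).PosDef := by
    intro k
    induction k with
    | zero => intro _; simpa [hPN] using hQf
    | succ k ih =>
      intro hk
      have hk' : k ≤ N := Nat.le_of_succ_le hk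
      have ht : N - (k + 1) < N := Nat.sub_lt (Nat.lt_of_lt_of_le (Nat.succ_pos k) hk) (Nat.succ_pos k)
      have hsucc : N - (k + 1) + 1 = N - k := by omega
      apply step _ ht
      rw [hsucc]
      exact ih hk'
  have hall : ∀ t, t ≤ N → (P t).PosDef := by
    intro t ht
    have h := key (N - t) (Nat.sub_le N t)
    rwa [Nat.sub_sub_self ht] at h
  refine ⟨hall, fun t ht => ?_⟩
  exact (middle_posDef B (hall (t + 1) ht) hL hR).isUnit
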